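/- arXiv:1104.5336 — 3 statements merged into one kernel-verified Lean document; each statement's English description precedes it below -/
import Mathlib

section
/- Let Y be a rational vector space, f : ℝ → Y, s ≥ 1, and δ > 0. If Δ_h^s f(x) = 0 for all x ∈ ℝ and all h ∈ (0, δ), then Δ_{h_1} ⋯ Δ_{h_s} f(x) = 0 for all x, h_1, ..., h_s ∈ ℝ. -/
/-- The difference operator `Δ_h f (x) = f (x + h) - f x`. -/
def dd {X Y : Type*} [Add X] [Sub Y] (h : X) (f : X → Y) : X → Y :=
  fun x => f (x + h) - f x

/-- Iterated difference `Δ_{h₁}(Δ_{h₂ ⋯ hₛ} f)` for a list of steps. -/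
def ddIter {X Y : Type*} [Add X] [Sub Y] (hs : List X) (f : X → Y) : X → Y :=
  hs.foldr dd f

/-!
Let `ℚ[ℝ]` act on functions `ℝ → Y` by translations and let `A` be its quotient by the
annihilator of `f`, with `χ t ∈ A` the class of the translation by `t`. Then `Δ_t` acts on `f`
as `χ t - 1`, and the claim is that `∏ i, (χ hᵢ - 1) = 0` whenever `(χ t - 1) ^ s = 0` for all
small `t > 0`. Since `χ t - 1` divides `χ (n t) - 1` and `χ (-t) - 1`, the hypothesis holds for
every `t`. Now polarize: writing `eᵢ = χ hᵢ`, the `s`-th difference in `j` of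
`∏ i, (eᵢ ^ j - 1)` is an alternating sum of the vanishing terms `(∏ i ∈ t, eᵢ - 1) ^ s`;
on the other hand `eᵢ ^ j - 1 = (eᵢ - 1) (1 + ⋯ + eᵢ ^ (j - 1))` and every `eᵢ - 1` is nilpotent,
so the same difference is `∏ i, (eᵢ - 1)` times an element congruent to `s!` modulo the
nilradical, hence times a unit.
-/

open Finset fwdDiff

lemma map_fwdDiff_iter {M G H F : Type*} [AddCommMonoid M] [AddCommGroup G] [AddCommGroup H]
    [FunLike F G H] [AddMonoidHomClass F G H] (φ : F) (h : M) (g : M → G) (n : ℕ) (y : M) :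
    φ ((Δ_[h])^[n] g y) = (Δ_[h])^[n] (φ ∘ g) y := by
  simp [fwdDiff_iter_eq_sum_shift, map_sum, map_zsmul]

section Polarization

variable {A : Type*} [CommRing A]

lemma fwdDiff_iter_pow_apply_zero (x : A) (n : ℕ) :
    (Δ_[1])^[n] (fun j : ℕ ↦ x ^ j) 0 = (x - 1) ^ n := by
  simpa [Function.comp_def] using
    fwdDiff_addChar_eq (AddChar.toMonoidHomEquiv.symm (powersHom A x)) 0 1 n

lemma fwdDiff_iter_natCast_pow_self_apply_zero (n : ℕ) :
    (Δ_[1])^[n] (fun j : ℕ ↦ (j : A) ^ n) 0 = n.factorial := by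
  have := congr_fun (fwdDiff_iter_eq_factorial (R := A) (n := n)) 0
  rw [fwdDiff_iter_eq_sum_shift] at this ⊢
  simpa using this

lemma isUnit_fwdDiff_iter_prod_geom_sum {ι : Type*} [Fintype ι] (e : ι → A)
    (hfac : IsUnit ((Fintype.card ι).factorial : A)) (he : ∀ i, IsNilpotent (e i - 1)) :
    IsUnit ((Δ_[1])^[Fintype.card ι] (fun j ↦ ∏ i, ∑ k ∈ range j, e i ^ k) 0) := by
  set L := Fintype.card ι
  set D := (Δ_[1])^[L] (fun j ↦ ∏ i, ∑ k ∈ range j, e i ^ k) 0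
  let π := Ideal.Quotient.mk (nilradical A)
  have hπe (i : ι) : π (e i) = 1 :=
    (Ideal.Quotient.eq.mpr (mem_nilradical.mpr (he i))).trans (map_one π)
  have hπu : π ∘ (fun j ↦ ∏ i, ∑ k ∈ range j, e i ^ k) =
      fun j : ℕ ↦ (j : A ⧸ nilradical A) ^ L := by
    funext j
    simp [map_prod, map_sum, hπe, L]
  have hπD : π D = π L.factorial := by
    rw [map_natCast, ← fwdDiff_iter_natCast_pow_self_apply_zero, map_fwdDiff_iter, hπu]
  have hnil : IsNilpotent (D - L.factorial) := mem_nilradical.mp (Ideal.Quotient.eq.mp hπD)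
  simpa using hnil.isUnit_add_left_of_commute hfac (Commute.all _ _)

theorem prod_sub_one_eq_zero_of_pow_card_eq_zero {ι : Type*} [Fintype ι] (e : ι → A)
    (hfac : IsUnit ((Fintype.card ι).factorial : A))
    (he : ∀ t : Finset ι, (∏ i ∈ t, e i - 1) ^ Fintype.card ι = 0) :
    ∏ i, (e i - 1) = 0 := by
  classical
  set L := Fintype.card ι
  set u : ℕ → A := fun j ↦ ∏ i, ∑ k ∈ range j, e i ^ k
  have hfactor : (fun j : ℕ ↦ ∏ i, (e i ^ j - 1)) = (∏ i, (e i - 1)) • u := by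
    ext j
    simp [u, ← prod_mul_distrib, geom_sum_mul, mul_comm]
  have hexpand : (fun j : ℕ ↦ ∏ i, (e i ^ j - 1)) =
      ∑ t ∈ univ.powerset, ((-1) ^ #t : A) • fun j ↦ (∏ i ∈ univ \ t, e i) ^ j := by
    ext j
    simp [prod_sub, prod_pow]
  have hzero : (∏ i, (e i - 1)) * (Δ_[1])^[L] u 0 = 0 := by
    rw [← smul_eq_mul, ← Pi.smul_apply, ← fwdDiff_iter_const_smul, ← hfactor, hexpand,
      fwdDiff_iter_finsetSum]
    simp [fwdDiff_iter_pow_apply_zero, he, L]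
  have hnil (i : ι) : IsNilpotent (e i - 1) := ⟨L, by simpa using he {i}⟩
  exact (isUnit_fwdDiff_iter_prod_geom_sum e hfac hnil).mul_left_eq_zero.mp hzero

end Polarization

namespace AddChar

variable {M A : Type*} [CommRing A]

lemma map_sum_eq_prod [AddCommMonoid M] {ι : Type*} (χ : AddChar M A) (s : Finset ι)
    (f : ι → M) : χ (∑ i ∈ s, f i) = ∏ i ∈ s, χ (f i) := by
  classical
  induction s using Finset.induction_on with
  | empty => simp
  | insert a s ha ih => rw [sum_insert ha, prod_insert ha, map_add_eq_mul, ih]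

lemma sub_one_dvd_map_nsmul_sub_one [AddMonoid M] (χ : AddChar M A) (n : ℕ) (a : M) :
    χ a - 1 ∣ χ (n • a) - 1 :=
  ⟨∑ k ∈ range n, χ a ^ k, by rw [map_nsmul_eq_pow, mul_comm, geom_sum_mul]⟩

lemma sub_one_dvd_map_neg_sub_one [AddGroup M] (χ : AddChar M A) (a : M) :
    χ a - 1 ∣ χ (-a) - 1 := by
  refine ⟨-χ (-a), ?_⟩
  have : χ (-a) * χ a = 1 := by rw [← map_add_eq_mul, neg_add_cancel, map_zero_eq_one]
  linear_combination this

lemma sub_one_pow_eq_zero_of_forall_mem_Ioo (χ : AddChar ℝ A) {s : ℕ} (hs : s ≠ 0) {δ : ℝ}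
    (hδ : 0 < δ) (h : ∀ t ∈ Set.Ioo 0 δ, (χ t - 1) ^ s = 0) (t : ℝ) : (χ t - 1) ^ s = 0 := by
  have of_dvd {a b : A} (hab : a ∣ b) (ha : a ^ s = 0) : b ^ s = 0 :=
    zero_dvd_iff.mp (ha ▸ pow_dvd_pow_of_dvd hab s)
  have hpos (t : ℝ) (ht : 0 < t) : (χ t - 1) ^ s = 0 := by
    obtain ⟨p, hp⟩ := exists_nat_gt (t / δ)
    have hp0 : (0 : ℝ) < p := (div_pos ht hδ).trans hp
    have hmem : t / p ∈ Set.Ioo 0 δ :=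
      ⟨div_pos ht hp0, (div_lt_iff₀ hp0).mpr (by rwa [div_lt_iff₀ hδ, mul_comm] at hp)⟩
    have hdvd : χ (t / p) - 1 ∣ χ t - 1 := by
      simpa [nsmul_eq_mul, mul_div_cancel₀ _ hp0.ne'] using
        χ.sub_one_dvd_map_nsmul_sub_one p (t / p)
    exact of_dvd hdvd (h _ hmem)
  rcases lt_trichotomy t 0 with ht | rfl | ht
  · have hdvd : χ (-t) - 1 ∣ χ t - 1 := by simpa using χ.sub_one_dvd_map_neg_sub_one (-t)
    exact of_dvd hdvd (hpos (-t) (neg_pos.mpr ht))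
  · simp [hs]
  · exact hpos t ht

end AddChar

section Translation

variable {Y : Type*} [AddCommGroup Y] [Module ℚ Y]

variable (Y) in
def translationAddChar : AddChar ℝ (Module.End ℚ (ℝ → Y)) where
  toFun h := LinearMap.funLeft ℚ Y (· + h)
  map_zero_eq_one' := by ext; simp [LinearMap.funLeft_apply]
  map_add_eq_mul' a b := by ext; simp [LinearMap.funLeft_apply, add_assoc]

variable (Y) in
noncomputable def translationAlgHom : AddMonoidAlgebra ℚ ℝ →ₐ[ℚ] Module.End ℚ (ℝ → Y) :=
  AddMonoidAlgebra.lift ℚ (Module.End ℚ (ℝ → Y)) ℝ (translationAddChar Y).toMonoidHom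

lemma translationAlgHom_of'_sub_one (h : ℝ) (g : ℝ → Y) :
    translationAlgHom Y (AddMonoidAlgebra.of' ℚ ℝ h - 1) g = dd h g := by
  ext x
  simp [translationAlgHom, translationAddChar, dd, LinearMap.funLeft_apply]

lemma ddIter_eq_translationAlgHom_prod (l : List ℝ) (g : ℝ → Y) :
    ddIter l g = translationAlgHom Y (l.map (AddMonoidAlgebra.of' ℚ ℝ · - 1)).prod g := by
  induction l with
  | nil => simp [ddIter]
  | cons a l ih =>
    rw [List.map_cons, List.prod_cons, map_mul, Module.End.mul_apply, ← ih,
      translationAlgHom_of'_sub_one]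
    rfl

noncomputable def translationAnnihilator (f : ℝ → Y) : Ideal (AddMonoidAlgebra ℚ ℝ) :=
  (Ideal.torsionOf (Module.End ℚ (ℝ → Y)) (ℝ → Y) f).comap (translationAlgHom Y)

noncomputable def translationQuotientChar (f : ℝ → Y) :
    AddChar ℝ (AddMonoidAlgebra ℚ ℝ ⧸ translationAnnihilator f) :=
  (Ideal.Quotient.mk (translationAnnihilator f)).toMonoidHom.compAddChar
    (AddChar.toMonoidHomEquiv.symm (AddMonoidAlgebra.of ℚ ℝ))

lemma translationQuotientChar_sub_one (f : ℝ → Y) (t : ℝ) :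
    translationQuotientChar f t - 1 =
      Ideal.Quotient.mk (translationAnnihilator f) (AddMonoidAlgebra.of' ℚ ℝ t - 1) := by
  simp [translationQuotientChar, AddMonoidAlgebra.of']

lemma mk_translationAnnihilator_eq_zero_iff (f : ℝ → Y) (p : AddMonoidAlgebra ℚ ℝ) :
    Ideal.Quotient.mk (translationAnnihilator f) p = 0 ↔ translationAlgHom Y p f = 0 := by
  rw [Ideal.Quotient.eq_zero_iff_mem]
  exact Ideal.mem_torsionOf_iff f _

lemma translationQuotientChar_sub_one_pow_eq_zero_iff (f : ℝ → Y) (t : ℝ) (n : ℕ) :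
    (translationQuotientChar f t - 1) ^ n = 0 ↔ (dd t)^[n] f = 0 := by
  rw [translationQuotientChar_sub_one, ← map_pow, mk_translationAnnihilator_eq_zero_iff, map_pow,
    Module.End.coe_pow, funext (translationAlgHom_of'_sub_one t)]

lemma prod_translationQuotientChar_sub_one_eq_zero_iff (f : ℝ → Y) {s : ℕ} (h : Fin s → ℝ) :
    ∏ i, (translationQuotientChar f (h i) - 1) = 0 ↔ ddIter (List.ofFn h) f = 0 := by
  simp only [translationQuotientChar_sub_one, ← map_prod, mk_translationAnnihilator_eq_zero_iff,
    ddIter_eq_translationAlgHom_prod, List.map_ofFn, List.prod_ofFn]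
  rfl

end Translation

theorem stmt7 {Y : Type*} [AddCommGroup Y] [Module ℚ Y] (f : ℝ → Y)
    (s : ℕ) (hs : 1 ≤ s) (δ : ℝ) (hδ : 0 < δ)
    (H : ∀ x : ℝ, ∀ h ∈ Set.Ioo (0 : ℝ) δ, (dd h)^[s] f x = 0) :
    ∀ (x : ℝ) (h : Fin s → ℝ), ddIter (List.ofFn h) f x = 0 := by
  intro x h
  set χ := translationQuotientChar f
  have hsmall (t : ℝ) (ht : t ∈ Set.Ioo 0 δ) : (χ t - 1) ^ s = 0 :=
    (translationQuotientChar_sub_one_pow_eq_zero_iff f t s).mpr (funext fun y ↦ H y t ht)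
  have hall := χ.sub_one_pow_eq_zero_of_forall_mem_Ioo (by omega) hδ hsmall
  have hprod : ∏ i, (χ (h i) - 1) = 0 :=
    prod_sub_one_eq_zero_of_pow_card_eq_zero _
      (by simpa using IsUnit.natCast_factorial_of_algebra ℚ s) fun t ↦ by
        simpa [← AddChar.map_sum_eq_prod] using hall (∑ i ∈ t, h i)
  exact congrFun ((prod_translationQuotientChar_sub_one_eq_zero_iff f h).mp hprod) x
end

section
/- Let K be a valued field containing ℚ_p with continuous inclusion, f : ℚ_p → K continuous, and N ∈ ℕ. If Δ_{p^N}^{n+1} f(x) = 0 for all x ∈ ℚ_p, then for each a ∈ ℚ_p there exist constants a_0, ..., a_n ∈ K such that f(x) = a_0 + a_1 x + ⋯ + a_n x^n for all x ∈ a + p^N ℤ_p. -/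
/-!
By the Gregory–Newton formula, the vanishing of `Δ_h^{n+1} f` gives
`f (a + k h) = ∑_{j ≤ n} C(k, j) Δ_h^j f (a)` for every `k : ℕ`, and `k ↦ C(k, j)` is a
polynomial of degree `j` in `k = (x - a) / h`. Hence `f` agrees with a polynomial of degree `≤ n`
in `ι x` on the progression `a + ℕ h`. Since `ℕ` is dense in `ℤ_[p]`, this progression is dense
in `a + h ℤ_[p]`, the closed ball of radius `‖h‖` about `a`, and continuity does the rest.
-/

open Finset Polynomial Function

section ForwardDifference

variable {M G : Type*} [AddCommMonoid M] [AddCommGroup G] {h : M} {f : M → G} {n : ℕ}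

theorem fwdDiff_iter_eq_zero_of_le (hf : (fwdDiff h)^[n] f = 0) {j : ℕ} (hj : n ≤ j) :
    (fwdDiff h)^[j] f = 0 := by
  obtain ⟨m, rfl⟩ := Nat.exists_eq_add_of_le hj
  rw [add_comm, iterate_add_apply, hf]
  exact iterate_fixed (fwdDiff_const (h := h) (0 : G)) m

theorem shift_eq_sum_range_fwdDiff_iter (hf : (fwdDiff h)^[n + 1] f = 0) (k : ℕ) (y : M) :
    f (y + k • h) = ∑ j ∈ range (n + 1), k.choose j • (fwdDiff h)^[j] f y := by
  have htail : ∀ j, k < j ∨ n + 1 ≤ j → k.choose j • (fwdDiff h)^[j] f y = 0 := by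
    rintro j (hkj | hnj)
    · rw [Nat.choose_eq_zero_of_lt hkj, zero_smul]
    · rw [fwdDiff_iter_eq_zero_of_le hf hnj, Pi.zero_apply, smul_zero]
  have hextend : ∀ m ≤ k + n + 1, (∀ j, m ≤ j → k < j ∨ n + 1 ≤ j) →
      ∑ j ∈ range m, k.choose j • (fwdDiff h)^[j] f y =
        ∑ j ∈ range (k + n + 1), k.choose j • (fwdDiff h)^[j] f y := fun m hm hm' ↦
    sum_subset (range_subset_range.mpr hm) fun j _ hj ↦
      htail j (hm' j (by simpa using hj))
  rw [shift_eq_sum_fwdDiff_iter h f k y, hextend (k + 1) (by omega) (fun j hj ↦ by omega),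
    hextend (n + 1) (by omega) (fun j hj ↦ by omega)]

end ForwardDifference

namespace Polynomial

variable {K : Type*} [Field K]

theorem exists_natDegree_le_eval_natCast_eq_sum_choose [CharZero K] (n : ℕ) (d : ℕ → K) :
    ∃ Q : K[X], Q.natDegree ≤ n ∧
      ∀ k : ℕ, Q.eval (k : K) = ∑ j ∈ range (n + 1), (k.choose j : K) * d j := by
  refine ⟨∑ j ∈ range (n + 1), C (d j / j.factorial) * descPochhammer K j, ?_, fun k ↦ ?_⟩
  · refine natDegree_sum_le_of_forall_le _ _ fun j hj ↦ ?_
    refine (natDegree_C_mul_le _ _).trans ?_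
    rw [descPochhammer_natDegree]
    exact Nat.lt_succ_iff.mp (mem_range.mp hj)
  · rw [eval_finsetSum]
    refine sum_congr rfl fun j _ ↦ ?_
    have hj : (j.factorial : K) ≠ 0 := Nat.cast_ne_zero.mpr j.factorial_ne_zero
    rw [eval_mul, eval_C, descPochhammer_eval_eq_descFactorial,
      Nat.descFactorial_eq_factorial_mul_choose, Nat.cast_mul]
    field_simp

theorem exists_natDegree_le_eval_add_mul_eq (Q : K[X]) (b : K) {s : K} (hs : s ≠ 0) :
    ∃ P : K[X], P.natDegree ≤ Q.natDegree ∧ ∀ t : K, P.eval (b + t * s) = Q.eval t := by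
  refine ⟨Q.comp (C s⁻¹ * (X - C b)), ?_, fun t ↦ ?_⟩
  · refine natDegree_comp_le.trans (mul_le_of_le_one_right' ?_)
    compute_degree
  · simp [mul_comm t, inv_mul_cancel_left₀ hs]

end Polynomial

namespace Padic

variable {p : ℕ} [Fact p.Prime]

theorem closedBall_subset_closure_range_add_natCast_mul (a h : ℚ_[p]) :
    Metric.closedBall a ‖h‖ ⊆ closure (Set.range fun k : ℕ ↦ a + k * h) := by
  intro x hx
  have hcont : Continuous fun z : ℤ_[p] ↦ a + z * h := by fun_prop
  obtain ⟨z, rfl⟩ : ∃ z : ℤ_[p], a + z * h = x := by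
    rcases eq_or_ne h 0 with rfl | hh
    · exact ⟨0, by simpa [eq_comm] using hx⟩
    · refine ⟨⟨(x - a) / h, ?_⟩, by simp [div_mul_cancel₀ _ hh]⟩
      rw [norm_div, div_le_one (norm_pos_iff.mpr hh)]
      simpa [dist_eq_norm] using hx
  have := image_closure_subset_closure_image hcont ⟨z, PadicInt.denseRange_natCast z, rfl⟩
  rwa [← Set.range_comp] at this

theorem eqOn_closedBall_of_eq_add_natCast_mul {X : Type*} [TopologicalSpace X] [T2Space X]
    {g₁ g₂ : ℚ_[p] → X} (h₁ : Continuous g₁) (h₂ : Continuous g₂) {a h : ℚ_[p]}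
    (heq : ∀ k : ℕ, g₁ (a + k * h) = g₂ (a + k * h)) :
    Set.EqOn g₁ g₂ (Metric.closedBall a ‖h‖) :=
  (Set.EqOn.closure (by rintro _ ⟨k, rfl⟩; exact heq k) h₁ h₂).mono
    (closedBall_subset_closure_range_add_natCast_mul a h)

end Padic

theorem stmt12 {p : ℕ} [Fact p.Prime] {K : Type*} [NormedField K]
    (ι : ℚ_[p] →+* K) (hι : Continuous ι)
    (f : ℚ_[p] → K) (hf : Continuous f) (n N : ℕ)
    (H : ∀ x : ℚ_[p], (dd ((p : ℚ_[p]) ^ N))^[n + 1] f x = 0) :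
    ∀ a : ℚ_[p], ∃ c : Fin (n + 1) → K,
      ∀ x : ℚ_[p], ‖x - a‖ ≤ (p : ℝ) ^ (-(N : ℤ)) →
        f x = ∑ i : Fin (n + 1), c i * (ι x) ^ (i : ℕ) := by
  intro a
  set h : ℚ_[p] := (p : ℚ_[p]) ^ N
  have hh : h ≠ 0 := pow_ne_zero _ (Nat.cast_ne_zero.mpr (Fact.out : p.Prime).ne_zero)
  have : CharZero K := (RingHom.charZero_iff ι.injective).mp inferInstance
  have hΔ : (fwdDiff h)^[n + 1] f = 0 := funext H
  obtain ⟨Q, hQdeg, hQ⟩ :=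
    exists_natDegree_le_eval_natCast_eq_sum_choose n fun j ↦ (fwdDiff h)^[j] f a
  obtain ⟨P, hPdeg, hP⟩ := Q.exists_natDegree_le_eval_add_mul_eq (ι a) ((map_ne_zero ι).mpr hh)
  have hnodes : ∀ k : ℕ, f (a + k * h) = P.eval (ι (a + k * h)) := fun k ↦ by
    rw [map_add, map_mul, map_natCast, hP, hQ, ← nsmul_eq_mul,
      shift_eq_sum_range_fwdDiff_iter hΔ k a]
    simp only [nsmul_eq_mul]
  have hball : Set.EqOn f (fun x ↦ P.eval (ι x)) (Metric.closedBall a ‖h‖) :=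
    Padic.eqOn_closedBall_of_eq_add_natCast_mul hf (P.continuous.comp hι) hnodes
  refine ⟨fun i ↦ P.coeff i, fun x hx ↦ (hball ?_).trans ?_⟩
  · rwa [Metric.mem_closedBall, dist_eq_norm, Padic.norm_p_pow]
  · exact (eval_eq_sum_range' (Nat.lt_succ_of_le (hPdeg.trans hQdeg)) _).trans
      (Fin.sum_univ_eq_sum_range (fun i ↦ P.coeff i * ι x ^ i) _).symm
end

section
/- Let Y be a rational vector space, f : ℚ_p → Y, s ≥ 1, N_1, ..., N_s ∈ ℤ, a_1, ..., a_s ∈ ℚ_p. If Δ_{h_1} ⋯ Δ_{h_s} f(x) = 0 for all x ∈ ℚ_p whenever h_k ∉ a_k + p^{-N_k} ℤ_p for every k = 1, ..., s, then Δ_{h_1} ⋯ Δ_{h_s} f(x) = 0 for all x, h_1, ..., h_s ∈ ℚ_p. -/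
/-!
Induct on `s`, peeling off the last step `hₛ`. Once `Δ_v Δ_{h₁ ⋯ hₛ₋₁} f` is known to vanish for
every `v` outside the ball `a + p^{-N} ℤ_p`, the restriction on `v` disappears through the identity
`Δ_v g (x) = Δ_{u+v} g (x) - Δ_u g (x + v)`, valid for every `u`: choose `u` so that both `u` and
`u + v` lie outside that ball, which is possible because the ball is bounded and `ℚ_p` is not.
-/

section DifferenceOperator

variable {X Y : Type*}

lemma ddIter_append [Add X] [Sub Y] (l₁ l₂ : List X) (f : X → Y) :
    ddIter (l₁ ++ l₂) f = ddIter l₁ (ddIter l₂ f) :=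
  List.foldr_append

lemma ddIter_ofFn_succ [Add X] [Sub Y] {n : ℕ} (h : Fin (n + 1) → X) (f : X → Y) :
    ddIter (List.ofFn h) f = ddIter (List.ofFn (h ∘ Fin.castSucc)) (dd (h (Fin.last n)) f) := by
  rw [List.ofFn_succ', List.concat_eq_append, ddIter_append]
  rfl

lemma ddIter_sub [Add X] [AddCommGroup Y] (l : List X) (F G : X → Y) (x : X) :
    ddIter l (fun y => F y - G y) x = ddIter l F x - ddIter l G x := by
  induction l generalizing x with
  | nil => rfl
  | cons h t ih =>
    show ddIter t _ (x + h) - ddIter t _ x = (ddIter t F (x + h) - ddIter t F x) -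
      (ddIter t G (x + h) - ddIter t G x)
    rw [ih, ih]
    abel

lemma ddIter_comp_add_right [AddCommSemigroup X] [Sub Y] (l : List X) (G : X → Y) (v x : X) :
    ddIter l (fun y => G (y + v)) x = ddIter l G (x + v) := by
  induction l generalizing x with
  | nil => rfl
  | cons h t ih =>
    show ddIter t _ (x + h) - ddIter t _ x = ddIter t G (x + v + h) - ddIter t G (x + v)
    rw [ih, ih, add_right_comm]

lemma dd_eq_dd_add_sub_dd [AddCommSemigroup X] [AddCommGroup Y] (f : X → Y) (u v x : X) :
    dd v f x = dd (u + v) f x - dd u f (x + v) := by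
  simp only [dd, add_comm u v, ← add_assoc]
  abel

lemma ddIter_dd_eq_zero_of_dd_add_eq_zero [AddCommSemigroup X] [AddCommGroup Y]
    (l : List X) (f : X → Y) {u v : X} (hu : ∀ x, ddIter l (dd u f) x = 0)
    (huv : ∀ x, ddIter l (dd (u + v) f) x = 0) (x : X) :
    ddIter l (dd v f) x = 0 := by
  have hsplit : dd v f = fun y => dd (u + v) f y - dd u f (y + v) :=
    funext (dd_eq_dd_add_sub_dd f u v)
  rw [hsplit, ddIter_sub, ddIter_comp_add_right, huv, hu, sub_zero]

end DifferenceOperator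

lemma exists_lt_norm_sub_and_lt_norm_add_sub {X : Type*} [SeminormedAddCommGroup X]
    (hX : ∀ r : ℝ, ∃ x : X, r < ‖x‖) (b v : X) (C : ℝ) :
    ∃ u : X, C < ‖u - b‖ ∧ C < ‖u + v - b‖ := by
  obtain ⟨u, hu⟩ := hX (C + ‖b‖ + ‖v - b‖)
  refine ⟨u, ?_, ?_⟩
  · linarith [norm_sub_norm_le u b, norm_nonneg (v - b)]
  · have := norm_sub_norm_le u (b - v)
    rw [norm_sub_rev, sub_sub_eq_add_sub] at this
    linarith [norm_nonneg b]

theorem ddIter_eq_zero_of_forall_lt_norm_sub {X Y : Type*} [SeminormedAddCommGroup X]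
    [AddCommGroup Y] (hX : ∀ r : ℝ, ∃ x : X, r < ‖x‖) {n : ℕ} (f : X → Y) (R : Fin n → ℝ)
    (a : Fin n → X)
    (H : ∀ x : X, ∀ h : Fin n → X, (∀ k, R k < ‖h k - a k‖) → ddIter (List.ofFn h) f x = 0)
    (x : X) (h : Fin n → X) : ddIter (List.ofFn h) f x = 0 := by
  induction n generalizing f x with
  | zero => exact H x h fun k => k.elim0
  | succ n ih =>
    have hfar : ∀ v, R (Fin.last n) < ‖v - a (Fin.last n)‖ →
        ∀ (h' : Fin n → X) x, ddIter (List.ofFn h') (dd v f) x = 0 := by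
      refine fun v hv h' x =>
        ih (dd v f) (R ∘ Fin.castSucc) (a ∘ Fin.castSucc) (fun x h' hh' => ?_) x h'
      have hsnoc : ∀ k, R k < ‖(Fin.snoc h' v : Fin (n + 1) → X) k - a k‖ :=
        Fin.lastCases (by simpa using hv) (fun i => by simpa using hh' i)
      have := H x _ hsnoc
      rwa [ddIter_ofFn_succ, Fin.snoc_last, Fin.snoc_comp_castSucc] at this
    obtain ⟨u, hu, huv⟩ :=
      exists_lt_norm_sub_and_lt_norm_add_sub hX (a (Fin.last n)) (h (Fin.last n)) (R (Fin.last n))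
    rw [ddIter_ofFn_succ]
    exact ddIter_dd_eq_zero_of_dd_add_eq_zero _ f (hfar u hu _) (hfar _ huv _) x

theorem stmt18_general {p : ℕ} [Fact p.Prime] {Y : Type*} [AddCommGroup Y]
    (f : ℚ_[p] → Y) (s : ℕ) (N : Fin s → ℤ) (a : Fin s → ℚ_[p])
    (H : ∀ x : ℚ_[p], ∀ h : Fin s → ℚ_[p],
      (∀ k, (p : ℝ) ^ (N k) < ‖h k - a k‖) → ddIter (List.ofFn h) f x = 0) :
    ∀ (x : ℚ_[p]) (h : Fin s → ℚ_[p]), ddIter (List.ofFn h) f x = 0 :=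
  ddIter_eq_zero_of_forall_lt_norm_sub (NormedField.exists_lt_norm ℚ_[p]) f _ a H

theorem stmt18 {p : ℕ} [Fact p.Prime] {Y : Type*} [AddCommGroup Y] [Module ℚ Y]
    (f : ℚ_[p] → Y) (s : ℕ) (hs : 1 ≤ s) (N : Fin s → ℤ) (a : Fin s → ℚ_[p])
    (H : ∀ x : ℚ_[p], ∀ h : Fin s → ℚ_[p],
      (∀ k, (p : ℝ) ^ (N k) < ‖h k - a k‖) → ddIter (List.ofFn h) f x = 0) :
    ∀ (x : ℚ_[p]) (h : Fin s → ℚ_[p]), ddIter (List.ofFn h) f x = 0 :=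
  stmt18_general f s N a H
end
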